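/- The operator Q = (1/2) D x̂ D − (1/3) D³ on F[x] lowers the degree of each polynomial by one, satisfies Qxⁿ = (n²/2) x^{n−1} − (1/3) n(n−1)(n−2) x^{n−3}, and there is no admissible sequence ψ and scalars q_k such that Q = ∂_ψ + Σ_{k≥2} q_k ∂_ψ^k. -/

import Mathlib

/-!
On coefficients, `(Q p)ₘ = (m+1)²/2 · pₘ₊₁ − (m+1)(m+2)(m+3)/3 · pₘ₊₃`, which gives the formula
for `Q xⁿ` and shows that `Q` lowers the degree by exactly one. If `Q xⁿ` were
`Σₖ cₖ (n)_ψ (n−1)_ψ ⋯ (n−k+1)_ψ xⁿ⁻ᵏ` with `c₁ = 1`, `c₃ = q₃` for every `n`, then the coefficient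
of `xⁿ⁻¹` forces `n_ψ = n²/2`, and the coefficient of `xⁿ⁻³` then reads
`q₃ · n²(n−1)²(n−2)²/8 = −n(n−1)(n−2)/3`; no constant `q₃` satisfies this for both `n = 3`
and `n = 4`.
-/

open Polynomial

/-- The operator Q = (1/2) D x̂ D − (1/3) D³ on ℚ[x]. -/
noncomputable def Qop : Module.End ℚ (Polynomial ℚ) :=
  (1 / 2 : ℚ) • (Polynomial.derivative ∘ₗ
      LinearMap.mulLeft ℚ (Polynomial.X : Polynomial ℚ) ∘ₗ Polynomial.derivative)
  - (1 / 3 : ℚ) • (Polynomial.derivative ∘ₗ Polynomial.derivative ∘ₗ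
      (Polynomial.derivative : Polynomial ℚ →ₗ[ℚ] Polynomial ℚ))

lemma coeff_Qop (p : ℚ[X]) (m : ℕ) :
    (Qop p).coeff m = (m + 1) ^ 2 / 2 * p.coeff (m + 1)
      - (m + 1) * (m + 2) * (m + 3) / 3 * p.coeff (m + 3) := by
  simp only [Qop, one_div, LinearMap.sub_apply, LinearMap.smul_apply, LinearMap.coe_comp,
    Function.comp_apply, LinearMap.mulLeft_apply, coeff_sub, coeff_smul, coeff_derivative,
    coeff_X_mul, smul_eq_mul, Nat.cast_add, Nat.cast_one]
  ring

lemma Qop_X_pow (n : ℕ) : Qop (X ^ n) =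
    ((n ^ 2 : ℚ) / 2) • X ^ (n - 1)
      - ((1 / 3 : ℚ) * n * (n - 1) * (n - 2)) • X ^ (n - 3) := by
  ext m
  simp only [coeff_Qop, coeff_sub, coeff_smul, coeff_X_pow, smul_eq_mul]
  rcases n with _ | _ | _ | n <;> simp [add_assoc] <;>
    split_ifs <;> subst_vars <;> first | omega | (push_cast; ring)

lemma coeff_Qop_X_pow_add_one (m : ℕ) : (Qop (X ^ (m + 1))).coeff m = (m + 1) ^ 2 / 2 := by
  simp [coeff_Qop, coeff_X_pow]

lemma coeff_Qop_X_pow_add_three (m : ℕ) :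
    (Qop (X ^ (m + 3))).coeff m = -((m + 1) * (m + 2) * (m + 3) / 3) := by
  simp [coeff_Qop, coeff_X_pow]

lemma natDegree_Qop_le (p : ℚ[X]) : (Qop p).natDegree ≤ p.natDegree - 1 := by
  rw [natDegree_le_iff_coeff_eq_zero]
  intro m hm
  rw [coeff_Qop, coeff_eq_zero_of_natDegree_lt (by omega),
    coeff_eq_zero_of_natDegree_lt (by omega)]
  ring

lemma coeff_Qop_natDegree_sub_one {p : ℚ[X]} (hp : 1 ≤ p.natDegree) :
    (Qop p).coeff (p.natDegree - 1) = p.natDegree ^ 2 / 2 * p.leadingCoeff := by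
  rw [coeff_Qop, Nat.sub_add_cancel hp,
    coeff_eq_zero_of_natDegree_lt (n := p.natDegree - 1 + 3) (by omega), Nat.cast_sub hp,
    leadingCoeff]
  ring

lemma coeff_Qop_natDegree_sub_one_ne_zero {p : ℚ[X]} (hp : 1 ≤ p.natDegree) :
    (Qop p).coeff (p.natDegree - 1) ≠ 0 := by
  have hn : (p.natDegree : ℚ) ≠ 0 := by exact_mod_cast (by omega : p.natDegree ≠ 0)
  have hlc : p.leadingCoeff ≠ 0 := leadingCoeff_ne_zero.mpr (by rintro rfl; simp at hp)
  rw [coeff_Qop_natDegree_sub_one hp]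
  positivity

lemma natDegree_Qop {p : ℚ[X]} (hp : 1 ≤ p.natDegree) :
    (Qop p).natDegree = p.natDegree - 1 :=
  natDegree_eq_of_le_of_coeff_ne_zero (natDegree_Qop_le p)
    (coeff_Qop_natDegree_sub_one_ne_zero hp)

lemma Qop_ne_zero {p : ℚ[X]} (hp : 1 ≤ p.natDegree) : Qop p ≠ 0 := fun h ↦
  coeff_Qop_natDegree_sub_one_ne_zero hp (by rw [h, coeff_zero])

lemma Qop_eq_zero_of_natDegree_eq_zero {p : ℚ[X]} (hp : p.natDegree = 0) : Qop p = 0 := by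
  rw [eq_C_of_natDegree_eq_zero hp]
  simp [Qop]

lemma coeff_sum_Icc_smul_X_pow_sub {R : Type*} [Semiring R] (c : ℕ → R) {k : ℕ} (hk : 1 ≤ k)
    (m : ℕ) : (∑ i ∈ Finset.Icc 1 (m + k), c i • (X : R[X]) ^ (m + k - i)).coeff m = c k := by
  rw [finsetSum_coeff, Finset.sum_eq_single k]
  · simp
  · intro i hi hik
    rw [Finset.mem_Icc] at hi
    rw [coeff_smul, coeff_X_pow, if_neg (by omega), smul_zero]
  · intro hk'
    exact absurd (Finset.mem_Icc.mpr ⟨hk, by omega⟩) hk'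

/-- Q lowers degree by exactly one, Qxⁿ = (n²/2)x^{n−1} − (1/3)n(n−1)(n−2)x^{n−3},
and Q is not of the form ∂_ψ + Σ_{k≥2} q_k ∂_ψᵏ for any admissible ψ. -/
theorem Qop_not_series_in_psi_derivative :
    ((∀ p : Polynomial ℚ, 1 ≤ p.natDegree →
        Qop p ≠ 0 ∧ (Qop p).natDegree = p.natDegree - 1) ∧
      ∀ p : Polynomial ℚ, p.natDegree = 0 → Qop p = 0) ∧
    (∀ n : ℕ, Qop (X ^ n) =
        ((n ^ 2 : ℚ) / 2) • X ^ (n - 1)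
          - ((1 / 3 : ℚ) * n * (n - 1) * (n - 2)) • X ^ (n - 3)) ∧
    ¬ ∃ (nψ q : ℕ → ℚ), nψ 0 = 0 ∧ (∀ n ≥ 1, nψ n ≠ 0) ∧
        ∀ n : ℕ, Qop (X ^ n) =
          ∑ k ∈ Finset.Icc 1 n,
            ((if k = 1 then 1 else q k) * ∏ j ∈ Finset.range k, nψ (n - j)) •
              X ^ (n - k) := by
  refine ⟨⟨fun p hp ↦ ⟨Qop_ne_zero hp, natDegree_Qop hp⟩,
    fun p ↦ Qop_eq_zero_of_natDegree_eq_zero⟩, Qop_X_pow, ?_⟩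
  rintro ⟨nψ, q, -, -, hQ⟩
  have hψ (m : ℕ) : nψ (m + 1) = (m + 1) ^ 2 / 2 := by
    have := congrArg (coeff · m) (hQ (m + 1))
    rw [coeff_Qop_X_pow_add_one, coeff_sum_Icc_smul_X_pow_sub _ le_rfl] at this
    simpa using this.symm
  have hq (m : ℕ) : q 3 * (nψ (m + 3) * nψ (m + 2) * nψ (m + 1)) =
      -((m + 1) * (m + 2) * (m + 3) / 3) := by
    have := congrArg (coeff · m) (hQ (m + 3))
    rw [coeff_Qop_X_pow_add_three, coeff_sum_Icc_smul_X_pow_sub _ (by norm_num)] at this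
    simpa [Finset.prod_range_succ] using this.symm
  have h3 := hq 0
  have h4 := hq 1
  rw [hψ 2, hψ 1, hψ 0] at h3
  rw [hψ 3, hψ 2, hψ 1] at h4
  -- `h3` says `q 3 = -4/9`, `h4` says `q 3 = -1/9`
  norm_num at h3 h4
  linarith
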